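/- Once a token satisfies the leader condition it stays fixed and remains a leader: if for some index i and time k ∈ ℕ one has C_i^k = {i}, then for all times ℓ ≥ k it holds that z_i^ℓ = z_i^k and C_i^ℓ = {i}. -/
import Mathlib

open scoped RealInnerProductSpace BigOperators Classical
open Filter Metric

noncomputable section

def attn {d n : ℕ} (z : Fin n → EuclideanSpace ℝ (Fin d)) (i : Fin n) : Finset (Fin n) :=
  Finset.univ.filter fun j => (⟪z i, z j⟫ = ⨆ ℓ, ⟪z i, z ℓ⟫)

def IsDyn {d n : ℕ} (α : ℝ) (z : ℕ → Fin n → EuclideanSpace ℝ (Fin d)) : Prop :=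
  ∀ k i, z (k + 1) i = z k i +
    (α / (1 + α)) • (((attn (z k) i).card : ℝ)⁻¹ • ∑ j ∈ attn (z k) i, (z k j - z k i))

lemma attn_nonempty {d n : ℕ} (hn : 0 < n) (z : Fin n → EuclideanSpace ℝ (Fin d)) (i : Fin n) :
    (attn z i).Nonempty := by
  have hne : Nonempty (Fin n) := ⟨⟨0, hn⟩⟩
  obtain ⟨j, hj⟩ := Finite.exists_max (fun ℓ => ⟪z i, z ℓ⟫)
  refine ⟨j, ?_⟩
  simp only [attn, Finset.mem_filter, Finset.mem_univ, true_and]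
  exact le_antisymm (le_ciSup (f := fun ℓ => ⟪z i, z ℓ⟫) (Set.Finite.bddAbove (Set.finite_range _)) j) (ciSup_le hj)

lemma step_lemma {d n : ℕ} (hn : 0 < n) (α : ℝ) (hα : 0 < α)
    (z : ℕ → Fin n → EuclideanSpace ℝ (Fin d)) (hdyn : IsDyn α z)
    (i : Fin n) (k : ℕ) (hk : attn (z k) i = {i}) :
    z (k + 1) i = z k i ∧ attn (z (k + 1)) i = {i} := by
  have hne : Nonempty (Fin n) := ⟨⟨0, hn⟩⟩
  have hfix : z (k + 1) i = z k i := by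
    rw [hdyn k i, hk]; simp
  set M := ⨆ ℓ, ⟪z k i, z k ℓ⟫ with hM
  have hbdd : BddAbove (Set.range fun ℓ => ⟪z k i, z k ℓ⟫) :=
    Set.Finite.bddAbove (Set.finite_range _)
  have hle : ∀ ℓ, ⟪z k i, z k ℓ⟫ ≤ M := fun ℓ => le_ciSup hbdd ℓ
  have hMi : ⟪z k i, z k i⟫ = M := by
    have : i ∈ attn (z k) i := by rw [hk]; exact Finset.mem_singleton_self i
    simpa [attn] using this
  have hlt : ∀ j, j ≠ i → ⟪z k i, z k j⟫ < M := by
    intro j hj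
    refine lt_of_le_of_ne (hle j) (fun h => hj ?_)
    have : j ∈ attn (z k) i := Finset.mem_filter.mpr ⟨Finset.mem_univ j, h⟩
    rw [hk] at this; exact Finset.mem_singleton.mp this
  set c := α / (1 + α) with hc
  have hc0 : 0 < c := div_pos hα (by linarith)
  have hc1 : c < 1 := by
    rw [hc, div_lt_one (by linarith)]; linarith
  have key : ∀ j, j ≠ i → ⟪z k i, z (k + 1) j⟫ < M := by
    intro j hj
    rw [hdyn k j]
    set S := attn (z k) j with hS
    have hSne : S.Nonempty := attn_nonempty hn _ j
    have hm0 : (0 : ℝ) < (S.card : ℝ) := by exact_mod_cast Finset.card_pos.mpr hSne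
    have hexp : ⟪z k i, z k j + c • (((S.card : ℝ))⁻¹ • ∑ ℓ ∈ S, (z k ℓ - z k j))⟫
        = ⟪z k i, z k j⟫ + c * ((S.card : ℝ)⁻¹ * ∑ ℓ ∈ S, (⟪z k i, z k ℓ⟫ - ⟪z k i, z k j⟫)) := by
      rw [inner_add_right, real_inner_smul_right, real_inner_smul_right, inner_sum]
      simp [inner_sub_right]
    rw [hexp]
    have hsum : ∑ ℓ ∈ S, (⟪z k i, z k ℓ⟫ - ⟪z k i, z k j⟫)
        ≤ (S.card : ℝ) * (M - ⟪z k i, z k j⟫) := by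
      calc ∑ ℓ ∈ S, (⟪z k i, z k ℓ⟫ - ⟪z k i, z k j⟫)
          ≤ ∑ ℓ ∈ S, (M - ⟪z k i, z k j⟫) :=
            Finset.sum_le_sum fun ℓ _ => by linarith [hle ℓ]
        _ = (S.card : ℝ) * (M - ⟪z k i, z k j⟫) := by
            rw [Finset.sum_const, nsmul_eq_mul]
    have hb := hlt j hj
    have h1 : (S.card : ℝ)⁻¹ * ∑ ℓ ∈ S, (⟪z k i, z k ℓ⟫ - ⟪z k i, z k j⟫)
        ≤ M - ⟪z k i, z k j⟫ := by
      rw [inv_mul_le_iff₀ hm0]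
      calc _ ≤ (S.card : ℝ) * (M - ⟪z k i, z k j⟫) := hsum
        _ = _ := by ring
    nlinarith
  have keyi : ⟪z k i, z (k + 1) i⟫ = M := by rw [hfix]; exact hMi
  have hM' : (⨆ ℓ, ⟪z (k + 1) i, z (k + 1) ℓ⟫) = M := by
    refine le_antisymm (ciSup_le fun ℓ => ?_) ?_
    · rw [hfix]
      by_cases h : ℓ = i
      · rw [h, keyi]
      · exact (key ℓ h).le
    · rw [← keyi, ← hfix]
      exact le_ciSup (f := fun ℓ => ⟪z (k + 1) i, z (k + 1) ℓ⟫) (Set.Finite.bddAbove (Set.finite_range _)) i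
  refine ⟨hfix, ?_⟩
  ext j
  simp only [attn, Finset.mem_filter, Finset.mem_univ, true_and, Finset.mem_singleton, hM']
  constructor
  · intro h
    by_contra hj
    rw [hfix] at h
    exact absurd h (ne_of_lt (key j hj))
  · rintro rfl
    rw [hfix] at keyi ⊢; exact keyi

/-- Once a token satisfies the leader condition it stays fixed and remains a leader. -/
theorem leader_stays_fixed {d n : ℕ} (hd : 0 < d) (hn : 0 < n) (α : ℝ) (hα : 0 < α)
    (z : ℕ → Fin n → EuclideanSpace ℝ (Fin d)) (hdyn : IsDyn α z)
    (i : Fin n) (k : ℕ) (hk : attn (z k) i = {i}) :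
    ∀ ℓ : ℕ, k ≤ ℓ → z ℓ i = z k i ∧ attn (z ℓ) i = {i} := by
  intro ℓ hℓ
  induction ℓ, hℓ using Nat.le_induction with
  | base => exact ⟨rfl, hk⟩
  | succ m hm ih =>
    obtain ⟨h1, h2⟩ := ih
    obtain ⟨h3, h4⟩ := step_lemma hn α hα z hdyn i m h2
    exact ⟨h3.trans h1, h4⟩

end
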